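/- Let φ be a nontrivial finite-order element of SO(4) acting on S³ ⊂ ℝ⁴, and suppose φ has a fixed point on S³. Then the fixed point set of φ on S³ is the intersection of S³ with a 2-dimensional linear subspace of ℝ⁴, hence is homeomorphic to a circle. -/

import Mathlib

open Module LinearMap

open scoped RealInnerProductSpace

/-- Over ℝ, the determinant of the adjoint equals the determinant. -/
lemma det_adjoint_real {E : Type*} [NormedAddCommGroup E] [InnerProductSpace ℝ E]
    [FiniteDimensional ℝ E] (f : E →ₗ[ℝ] E) :
    LinearMap.det (LinearMap.adjoint f) = LinearMap.det f := by
  let b := stdOrthonormalBasis ℝ E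
  rw [← LinearMap.det_toMatrix b.toBasis (LinearMap.adjoint f),
    ← LinearMap.det_toMatrix b.toBasis f, LinearMap.toMatrix_adjoint,
    Matrix.det_conjTranspose, star_trivial]

/-- An inner-product-preserving endomorphism of an odd-dimensional real inner product
space with determinant one has a nonzero fixed vector. -/
lemma odd_so_fixed {E : Type*} [NormedAddCommGroup E] [InnerProductSpace ℝ E]
    [FiniteDimensional ℝ E] (hodd : Odd (finrank ℝ E))
    (f : E →ₗ[ℝ] E) (hinner : ∀ x y : E, ⟪f x, f y⟫ = ⟪x, y⟫)
    (hdet : LinearMap.det f = 1) : ∃ v : E, v ≠ 0 ∧ f v = v := by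
  set a := LinearMap.adjoint f with ha
  have haf : a ∘ₗ f = LinearMap.id := by
    ext x
    refine ext_inner_right ℝ fun y => ?_
    rw [LinearMap.comp_apply, LinearMap.adjoint_inner_left]
    exact hinner x y
  have hdeta : LinearMap.det a = 1 := by rw [ha, det_adjoint_real, hdet]
  have key : a ∘ₗ (f - LinearMap.id) = LinearMap.id - a := by
    rw [LinearMap.comp_sub, haf, LinearMap.comp_id]
  have h1 : LinearMap.id - a = LinearMap.adjoint (LinearMap.id - f) := by
    rw [ha, map_sub]
    congr 1
    exact (LinearMap.eq_adjoint_iff _ _).mpr fun x y => rfl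
  have h2 : LinearMap.det (f - LinearMap.id) = LinearMap.det (LinearMap.id - f) := by
    calc LinearMap.det (f - LinearMap.id)
        = LinearMap.det a * LinearMap.det (f - LinearMap.id) := by rw [hdeta, one_mul]
      _ = LinearMap.det (a ∘ₗ (f - LinearMap.id)) := (LinearMap.det_comp _ _).symm
      _ = LinearMap.det (LinearMap.id - f) := by rw [key, h1, det_adjoint_real]
  have h3 : LinearMap.id - f = (-1 : ℝ) • (f - LinearMap.id) := by
    rw [neg_one_smul, neg_sub]
  rw [h3, LinearMap.det_smul, hodd.neg_one_pow] at h2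
  have hz : LinearMap.det (f - LinearMap.id) = 0 := by linarith
  obtain ⟨v, hv, hv0⟩ := Submodule.exists_mem_ne_zero_of_ne_bot
    (ne_of_gt (LinearMap.bot_lt_ker_of_det_eq_zero hz))
  refine ⟨v, hv0, ?_⟩
  have := LinearMap.mem_ker.mp hv
  rw [LinearMap.sub_apply, LinearMap.id_apply, sub_eq_zero] at this
  exact this

/-- A nontrivial finite-order element of `SO(4)` acting on `S³ ⊂ ℝ⁴` with nonempty fixed
point set has fixed point set equal to the intersection of `S³` with a 2-dimensional
linear subspace (hence a circle). -/
theorem stmt_7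
    (g : Matrix (Fin 4) (Fin 4) ℝ)
    (hg : g ∈ Matrix.orthogonalGroup (Fin 4) ℝ)
    (hdet : g.det = 1)
    (hne : g ≠ 1)
    (n : ℕ) (hn : 1 ≤ n) (horder : g ^ n = 1)
    (hfix : ∃ x ∈ Metric.sphere (0 : EuclideanSpace ℝ (Fin 4)) 1,
      Matrix.toEuclideanLin g x = x) :
    ∃ L : Submodule ℝ (EuclideanSpace ℝ (Fin 4)), Module.finrank ℝ L = 2 ∧
      {x ∈ Metric.sphere (0 : EuclideanSpace ℝ (Fin 4)) 1 | Matrix.toEuclideanLin g x = x} =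
        Metric.sphere (0 : EuclideanSpace ℝ (Fin 4)) 1 ∩ (L : Set (EuclideanSpace ℝ (Fin 4))) := by
  classical
  set E := EuclideanSpace ℝ (Fin 4)
  set f : E →ₗ[ℝ] E := Matrix.toEuclideanLin g with hfdef
  -- adjoint of f composed with f is the identity
  obtain ⟨hg1, hg2⟩ := (Unitary.mem_iff).mp hg
  have hstar : (star g : Matrix (Fin 4) (Fin 4) ℝ) = g.conjTranspose := rfl
  have hadj : LinearMap.adjoint f = Matrix.toEuclideanLin g.conjTranspose :=
    (Matrix.toEuclideanLin_conjTranspose_eq_adjoint g).symm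
  have hmul : ∀ A B : Matrix (Fin 4) (Fin 4) ℝ,
      Matrix.toEuclideanLin (A * B) = (Matrix.toEuclideanLin A) ∘ₗ (Matrix.toEuclideanLin B) := by
    intro A B
    simp only [Matrix.toEuclideanLin_eq_toLin, Matrix.toLin_mul _ (PiLp.basisFun 2 ℝ (Fin 4)) _]
  have hone : Matrix.toEuclideanLin (1 : Matrix (Fin 4) (Fin 4) ℝ) = LinearMap.id := by
    simp only [Matrix.toEuclideanLin_eq_toLin, Matrix.toLin_one]
  have haf : (LinearMap.adjoint f) ∘ₗ f = LinearMap.id := by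
    rw [hadj, hfdef, ← hmul, ← hstar, hg1, hone]
  have hax : ∀ z : E, (LinearMap.adjoint f) (f z) = z := by
    intro z
    simpa using LinearMap.ext_iff.mp haf z
  have hinner : ∀ x y : E, ⟪f x, f y⟫ = ⟪x, y⟫ := by
    intro x y
    have h : ⟪(LinearMap.adjoint f) (f x), y⟫ = ⟪f x, f y⟫ :=
      LinearMap.adjoint_inner_left f y (f x)
    rw [hax x] at h
    exact h.symm
  -- the fixed subspace
  set V : Submodule ℝ E := LinearMap.ker (f - LinearMap.id) with hVdef
  have hmemV : ∀ x : E, x ∈ V ↔ f x = x := by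
    intro x
    rw [hVdef, LinearMap.mem_ker, LinearMap.sub_apply, LinearMap.id_apply, sub_eq_zero]
  obtain ⟨x₀, hx₀s, hx₀f⟩ := hfix
  have hx₀ne : x₀ ≠ 0 := by
    intro h
    rw [h] at hx₀s
    simp at hx₀s
  have hVbot : V ≠ ⊥ := by
    intro h
    exact hx₀ne (by simpa [h] using (hmemV x₀).mpr hx₀f)
  have hVpos : 0 < finrank ℝ V := Module.finrank_pos_iff.mpr
    (Submodule.nontrivial_iff_ne_bot.mpr hVbot)
  have hVtop : V ≠ ⊤ := by
    intro h
    apply hne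
    apply (Matrix.toEuclideanLin (𝕜 := ℝ) (m := Fin 4) (n := Fin 4)).injective
    rw [← hfdef, hone]
    refine LinearMap.ext fun x => ?_
    exact (hmemV x).mp (h ▸ Submodule.mem_top)
  have hE4 : finrank ℝ E = 4 := by
    simp [E, finrank_euclideanSpace]
  have hVlt : finrank ℝ V < 4 := by
    have := Submodule.finrank_lt hVtop
    rwa [hE4] at this
  -- orthogonal complement is invariant
  have hVperp : ∀ x ∈ Vᗮ, f x ∈ Vᗮ := by
    intro x hx
    rw [Submodule.mem_orthogonal]
    intro v hv
    have hfv : f v = v := (hmemV v).mp hv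
    calc ⟪v, f x⟫ = ⟪f v, f x⟫ := by rw [hfv]
      _ = ⟪v, x⟫ := hinner v x
      _ = 0 := (Submodule.mem_orthogonal V x).mp hx v hv
  set f' : Vᗮ →ₗ[ℝ] Vᗮ := f.restrict (fun x hx => hVperp x hx) with hf'def
  have hf'coe : ∀ x : Vᗮ, (f' x : E) = f (x : E) := fun x => rfl
  have hf'inner : ∀ x y : (Vᗮ : Submodule ℝ E), ⟪f' x, f' y⟫ = ⟪x, y⟫ := by
    intro x y
    rw [Submodule.coe_inner, Submodule.coe_inner, hf'coe, hf'coe]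
    exact hinner _ _
  -- determinant of f equals 1
  have hdetf : LinearMap.det f = 1 := by
    rw [hfdef, Matrix.toEuclideanLin_eq_toLin, LinearMap.det_toLin, hdet]
  -- determinant of the restriction equals 1
  have hcs : IsCompl V Vᗮ := Submodule.isCompl_orthogonal_of_hasOrthogonalProjection
  set e : (V × Vᗮ) ≃ₗ[ℝ] E := Submodule.prodEquivOfIsCompl V Vᗮ hcs with hedef
  have hconj : (e.symm : E →ₗ[ℝ] V × Vᗮ) ∘ₗ f ∘ₗ ((e.symm).symm : (V × Vᗮ) →ₗ[ℝ] E)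
      = (LinearMap.id.prodMap f') := by
    apply LinearMap.ext
    rintro ⟨v, w⟩
    apply e.injective
    rw [LinearEquiv.symm_symm]
    simp only [LinearMap.comp_apply, LinearEquiv.coe_coe, LinearEquiv.apply_symm_apply]
    have h1 : e (v, w) = (v : E) + (w : E) := by
      simp [hedef, Submodule.coe_prodEquivOfIsCompl']
    have h2 : e ((LinearMap.id.prodMap f') (v, w)) = (v : E) + (f' w : E) := by
      simp [hedef, Submodule.coe_prodEquivOfIsCompl']
    rw [h1, h2, map_add, (hmemV (v : E)).mp v.2, hf'coe]
  have hdetf' : LinearMap.det f' = 1 := by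
    have h3 : LinearMap.det (LinearMap.id.prodMap f' : (V × Vᗮ) →ₗ[ℝ] (V × Vᗮ)) = 1 := by
      rw [← hconj, LinearMap.det_conj f e.symm, hdetf]
    rw [← LinearMap.det_toMatrix ((finBasis ℝ V).prod (finBasis ℝ Vᗮ)),
      LinearMap.toMatrix_prodMap, Matrix.det_fromBlocks_zero₂₁] at h3
    rw [← LinearMap.det_toMatrix (finBasis ℝ Vᗮ) f']
    simpa [LinearMap.toMatrix_id] using h3
  -- the orthogonal complement cannot be odd-dimensional
  have hsum : finrank ℝ V + finrank ℝ Vᗮ = 4 := by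
    have := V.finrank_add_finrank_orthogonal
    rwa [hE4] at this
  have hnotodd : ¬ Odd (finrank ℝ (Vᗮ : Submodule ℝ E)) := by
    intro hodd
    obtain ⟨w, hw0, hww⟩ := odd_so_fixed hodd f' hf'inner hdetf'
    have hwV : (w : E) ∈ V := by
      rw [hmemV, ← hf'coe, hww]
    have : (w : E) = 0 :=
      Submodule.disjoint_def.mp (Submodule.orthogonal_disjoint V) _ hwV w.2
    exact hw0 (Subtype.ext this)
  have hd2 : finrank ℝ V = 2 := by
    rcases Nat.even_or_odd (finrank ℝ (Vᗮ : Submodule ℝ E)) with he | ho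
    · rw [Nat.even_iff] at he
      rw [Nat.lt_iff_add_one_le] at hVlt
      omega
    · exact absurd ho hnotodd
  refine ⟨V, hd2, ?_⟩
  ext x
  simp only [Set.mem_setOf_eq, Set.mem_inter_iff, SetLike.mem_coe, hmemV]
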